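/- Suppose $\mathrm{T}_d$ is a semistandard $\lambda$-tableau of type $(\alpha|\beta)$ and $d' \in \mathrm{Sym}_n$ satisfies $\mathfrak{a}_{d',d} \ne 0$. Then $d' \unrhd d$ in the column-dominance pre-order, i.e., $\mathrm{T}_{d'} \unrhd \mathrm{T}_d$. -/

import Mathlib

namespace SignedYoung
open Equiv Finset
open scoped Classical

abbrev Sym (n : ℕ) := Equiv.Perm (Fin n)

/-- Index of the block of the composition `γ` containing position `i` (0-based). -/
def blockOf (γ : List ℕ) (i : ℕ) : ℕ :=
  (List.range γ.length).countP (fun j => decide ((γ.take (j + 1)).sum ≤ i))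

/-- The Young subgroup of `Sym n` associated to the composition `γ`. -/
def youngSubgroup (n : ℕ) (γ : List ℕ) : Subgroup (Sym n) where
  carrier := {σ | ∀ i : Fin n, blockOf γ (σ i) = blockOf γ i}
  one_mem' := by intro i; simp
  mul_mem' := by
    intro a b ha hb i
    simp only [Equiv.Perm.mul_apply]
    rw [ha, hb]
  inv_mem' := by
    intro a ha i
    have h := ha (a⁻¹ i)
    rw [show a (a⁻¹ i) = i from a.apply_symm_apply i] at h
    exact h.symm

/-- The subgroup `Sym_α` of the Young subgroup `Sym_{α|β}`: block-preserving permutations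
fixing all points `≥ |α|`. -/
def symA (n : ℕ) (α β : List ℕ) : Set (Sym n) :=
  {σ | σ ∈ youngSubgroup n (α ++ β) ∧ ∀ i : Fin n, α.sum ≤ (i : ℕ) → σ i = i}

/-- The subgroup `Sym_β^{+|α|}`: block-preserving permutations fixing all points `< |α|`. -/
def symB (n : ℕ) (α β : List ℕ) : Set (Sym n) :=
  {σ | σ ∈ youngSubgroup n (α ++ β) ∧ ∀ i : Fin n, (i : ℕ) < α.sum → σ i = i}

/-- Cells of the Young diagram of the composition `lam`. -/
abbrev Cell (lam : List ℕ) := (i : Fin lam.length) × Fin (lam.get i)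

/-- A `lam`-tableau: a bijective labelling of the cells by `1, …, n` (here `Fin n`). -/
abbrev Tab (n : ℕ) (lam : List ℕ) := Cell lam ≃ Fin n

/-- The row stabilizer of a tableau. -/
def rowStab {n : ℕ} {lam : List ℕ} (t : Tab n lam) : Set (Sym n) :=
  {σ | ∀ a : Fin n, (t.symm (σ a)).1 = (t.symm a).1}

/-- The column stabilizer of a tableau. -/
def colStab {n : ℕ} {lam : List ℕ} (t : Tab n lam) : Set (Sym n) :=
  {σ | ∀ a : Fin n, ((t.symm (σ a)).2 : ℕ) = ((t.symm a).2 : ℕ)}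

/-- Colours `c_1 < c_2 < ⋯ < d_1 < d_2 < ⋯` (0-based). -/
abbrev Colour := Lex (ℕ ⊕ ℕ)

def cCol (k : ℕ) : Colour := toLex (Sum.inl k)

def dCol (k : ℕ) : Colour := toLex (Sum.inr k)

/-- `T` is a `lam`-tableau of type `(α|β)`: exactly `α_k` cells of colour `c_k` and
`β_k` of colour `d_k`. -/
def HasType {lam : List ℕ} (α β : List ℕ) (T : Cell lam → Colour) : Prop :=
  (∀ k : ℕ, (Finset.univ.filter fun c => T c = cCol k).card = α.getD k 0) ∧
  (∀ k : ℕ, (Finset.univ.filter fun c => T c = dCol k).card = β.getD k 0)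

/-- The colour of the number `i` under the canonical colouring by `(α|β)`. -/
def colourOfIdx (α β : List ℕ) (i : ℕ) : Colour :=
  if blockOf (α ++ β) i < α.length then cCol (blockOf (α ++ β) i)
  else dCol (blockOf (α ++ β) i - α.length)

/-- The canonical `lam`-tableau of type `(α|β)` associated to the tableau `t0`. -/
def canonT {n : ℕ} {lam : List ℕ} (t0 : Tab n lam) (α β : List ℕ) : Cell lam → Colour :=
  fun c => colourOfIdx α β (t0 c)

/-- The action `σ · T = T ∘ t0⁻¹ ∘ σ⁻¹ ∘ t0` of `Sym n` on tableaux of type `(α|β)`,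
through the fixed tableau `t0`. -/
def actT {n : ℕ} {lam : List ℕ} (t0 : Tab n lam) (σ : Sym n) (T : Cell lam → Colour) :
    Cell lam → Colour :=
  fun c => T (t0.symm (σ⁻¹ (t0 c)))

/-- `T_d = d · T_0`. -/
def TOf {n : ℕ} {lam : List ℕ} (t0 : Tab n lam) (α β : List ℕ) (d : Sym n) :
    Cell lam → Colour :=
  actT t0 d (canonT t0 α β)

def RowSemistd {lam : List ℕ} (T : Cell lam → Colour) : Prop :=
  ∀ c c' : Cell lam, c.1 = c'.1 → (c.2 : ℕ) < (c'.2 : ℕ) → T c ≤ T c'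

def ColSemistd {lam : List ℕ} (T : Cell lam → Colour) : Prop :=
  ∀ c c' : Cell lam, (c.2 : ℕ) = (c'.2 : ℕ) → c.1 < c'.1 → T c ≤ T c'

/-- Repeats in a row occur only for colours `c_k`. -/
def RowRepeatC {lam : List ℕ} (T : Cell lam → Colour) : Prop :=
  ∀ c c' : Cell lam, c.1 = c'.1 → (c.2 : ℕ) ≠ (c'.2 : ℕ) → T c = T c' → ∃ k, T c = cCol k

/-- Repeats in a column occur only for colours `d_k`. -/
def ColRepeatD {lam : List ℕ} (T : Cell lam → Colour) : Prop :=
  ∀ c c' : Cell lam, (c.2 : ℕ) = (c'.2 : ℕ) → c.1 ≠ c'.1 → T c = T c' → ∃ k, T c = dCol k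

def IsSemistd {lam : List ℕ} (T : Cell lam → Colour) : Prop :=
  RowSemistd T ∧ ColSemistd T ∧ RowRepeatC T ∧ ColRepeatD T

/-- A standard tableau: strictly increasing along rows and down columns. -/
def IsStd {n : ℕ} {lam : List ℕ} (t : Tab n lam) : Prop :=
  (∀ c c' : Cell lam, c.1 = c'.1 → (c.2 : ℕ) < (c'.2 : ℕ) → t c < t c') ∧
  (∀ c c' : Cell lam, (c.2 : ℕ) = (c'.2 : ℕ) → c.1 < c'.1 → t c < t c')

def IsPartition (n : ℕ) (lam : List ℕ) : Prop :=
  lam.Pairwise (· ≥ ·) ∧ (∀ x ∈ lam, 0 < x) ∧ lam.sum = n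

def IsBicomp (n : ℕ) (α β : List ℕ) : Prop :=
  (∀ x ∈ α, 0 < x) ∧ (∀ x ∈ β, 0 < x) ∧ α.sum + β.sum = n

/-- `𝒮 = {d : d⁻¹ R_{t0} d ∩ Sym_{α|β} ⊆ Sym_α}`. -/
def RSet {n : ℕ} {lam : List ℕ} (t0 : Tab n lam) (α β : List ℕ) : Set (Sym n) :=
  {d | ∀ σ ∈ rowStab t0, d⁻¹ * σ * d ∈ youngSubgroup n (α ++ β) →
    d⁻¹ * σ * d ∈ symA n α β}

/-- `𝒞 = {d : d⁻¹ C_{t0} d ∩ Sym_{α|β} ⊆ Sym_β^{+|α|}}`. -/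
def CSet {n : ℕ} {lam : List ℕ} (t0 : Tab n lam) (α β : List ℕ) : Set (Sym n) :=
  {d | ∀ σ ∈ colStab t0, d⁻¹ * σ * d ∈ youngSubgroup n (α ++ β) →
    d⁻¹ * σ * d ∈ symB n α β}

/-- The double coset `R_{t0} x Sym_{α|β}`. -/
def dCoset {n : ℕ} {lam : List ℕ} (t0 : Tab n lam) (α β : List ℕ) (x : Sym n) :
    Set (Sym n) :=
  {ω | ∃ τ ∈ rowStab t0, ∃ ξ ∈ youngSubgroup n (α ++ β), ω = τ * x * ξ}

/-- The double coset `C_{t0} x Sym_{α|β}`. -/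
def cCoset {n : ℕ} {lam : List ℕ} (t0 : Tab n lam) (α β : List ℕ) (x : Sym n) :
    Set (Sym n) :=
  {ω | ∃ σ ∈ colStab t0, ∃ ξ ∈ youngSubgroup n (α ++ β), ω = σ * x * ξ}

/-- `ε` is the sign function `ε_𝔡` on the double coset `R_{t0} 𝔡 Sym_{α|β}`:
`ε(τ 𝔡 ξ_α ξ_β^{+|α|}) = sgn ξ_β`. -/
def IsEps {n : ℕ} {lam : List ℕ} (t0 : Tab n lam) (α β : List ℕ) (𝔡 : Sym n)
    (ε : Sym n → ℤ) : Prop :=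
  ∀ τ ∈ rowStab t0, ∀ ξa ∈ symA n α β, ∀ ξb ∈ symB n α β,
    ε (τ * 𝔡 * (ξa * ξb)) = (Equiv.Perm.sign ξb : ℤ)

/-- The coefficient `𝔞_{d,𝔡} = ∑_{σ ∈ C_{t0}, σd ∈ R_{t0} 𝔡 Sym_{α|β}} sgn(σ) ε_𝔡(σ d)`. -/
noncomputable def coeffA {n : ℕ} {lam : List ℕ} (t0 : Tab n lam) (α β : List ℕ)
    (ε : Sym n → ℤ) (d 𝔡 : Sym n) : ℤ :=
  ∑ σ : Sym n, if σ ∈ colStab t0 ∧ σ * d ∈ dCoset t0 α β 𝔡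
    then (Equiv.Perm.sign σ : ℤ) * ε (σ * d) else 0

/-- The multiset of colours in column `j` of `T`. -/
def colMul {lam : List ℕ} (T : Cell lam → Colour) (j : ℕ) : Multiset Colour :=
  (Finset.univ.filter fun c : Cell lam => (c.2 : ℕ) = j).val.map T

noncomputable def sortedCol (m : Multiset Colour) : List Colour := m.sort (· ≤ ·)

/-- Comparison of column multisets: the sorted lists agree up to position `k`, where
the first is larger. -/
def msGT (m m' : Multiset Colour) : Prop :=
  ∃ k, (∀ s, s < k → (sortedCol m).getD s (cCol 0) = (sortedCol m').getD s (cCol 0)) ∧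
    (sortedCol m').getD k (cCol 0) < (sortedCol m).getD k (cCol 0)

/-- The strict column-dominance order `T ⊳ T'`. -/
def TabGT {lam : List ℕ} (T T' : Cell lam → Colour) : Prop :=
  ∃ t, (∀ j, j < t → colMul T j = colMul T' j) ∧ msGT (colMul T t) (colMul T' t)

/-- The column-dominance pre-order `T ⊵ T'`. -/
def TabGE {lam : List ℕ} (T T' : Cell lam → Colour) : Prop :=
  (∀ j, colMul T j = colMul T' j) ∨ TabGT T T'

/-! A nonzero term of `𝔞_{d',d}` gives `σ ∈ C_{t₀}`, `τ ∈ R_{t₀}` and `ξ ∈ Sym_{α|β}` with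
`σ d' = τ d ξ`, so `T_{d'} = σ⁻¹ · τ · T_d`. Acting by `σ⁻¹` only permutes entries within columns,
so `T_{d'}` has the column multisets of `τ · T_d`, a rearrangement of `T_d` within rows. Since the
rows of `T_d` weakly increase, for every `j` and `x` such a rearrangement can only lower the number
of entries `≤ x` in the columns `≤ j`. At the first column where the multisets differ, this makes
the sorted column of `τ · T_d` entrywise at least that of `T_d`, hence larger at the first
difference. -/

section SortedLists

variable {γ : Type*} [LinearOrder γ]

lemma _root_.List.SortedLE.lt_length_filter_le_iff {L : List γ} (hL : L.SortedLE) {s : ℕ}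
    (hs : s < L.length) (x : γ) : s < (L.filter (· ≤ x)).length ↔ L[s] ≤ x := by
  constructor
  · intro hlt
    by_contra! hx
    have hdrop : (L.drop s).filter (· ≤ x) = [] := by
      refine List.filter_eq_nil_iff.2 fun a ha => ?_
      obtain ⟨i, hi, rfl⟩ := List.mem_drop_iff_getElem.1 ha
      simpa using hx.trans_le (hL.getElem_le_getElem_of_le (Nat.le_add_right s i))
    have : (L.filter (· ≤ x)).length ≤ s := by
      rw [← List.take_append_drop s L, List.filter_append, hdrop, List.append_nil]
      exact (List.length_filter_le _ _).trans (List.length_take_le _ _)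
    omega
  · intro hx
    have htake : (L.take (s + 1)).filter (· ≤ x) = L.take (s + 1) := by
      refine List.filter_eq_self.2 fun a ha => ?_
      obtain ⟨i, hi, rfl⟩ := List.mem_take_iff_getElem.1 ha
      simpa using (hL.getElem_le_getElem_of_le (by omega)).trans hx
    calc s < (L.take (s + 1)).length := by rw [List.length_take]; omega
      _ = ((L.take (s + 1)).filter (· ≤ x)).length := by rw [htake]
      _ ≤ (L.filter (· ≤ x)).length := ((List.take_sublist _ _).filter _).length_le

lemma _root_.List.SortedLE.getElem_le_getElem_of_length_filter_le {L L' : List γ}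
    (hL : L.SortedLE) (hL' : L'.SortedLE) (hlen : L.length = L'.length)
    (hcnt : ∀ x, (L'.filter (· ≤ x)).length ≤ (L.filter (· ≤ x)).length)
    {s : ℕ} (hs : s < L.length) : L[s] ≤ L'[s] :=
  (hL.lt_length_filter_le_iff hs _).1 <|
    ((hL'.lt_length_filter_le_iff (hlen ▸ hs) _).2 le_rfl).trans_le (hcnt _)

lemma _root_.List.exists_getD_ne_of_ne {L L' : List γ} (hlen : L.length = L'.length)
    (hne : L ≠ L') (d : γ) :
    ∃ k, (∀ s < k, L.getD s d = L'.getD s d) ∧ ∃ hk : k < L.length, L[k] ≠ L'[k] := by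
  have hex : ∃ k, L.getD k d ≠ L'.getD k d := by
    by_contra! hall
    refine hne (List.ext_getElem hlen fun i h₁ h₂ => ?_)
    simpa only [List.getD_eq_getElem _ _ h₁, List.getD_eq_getElem _ _ h₂] using hall i
  have hk : Nat.find hex < L.length := by
    by_contra! hk
    exact Nat.find_spec hex <| by
      rw [List.getD_eq_default _ _ hk, List.getD_eq_default _ _ (hlen ▸ hk)]
  refine ⟨Nat.find hex, fun s hs => not_not.1 (Nat.find_min hex hs), hk, ?_⟩
  simpa only [List.getD_eq_getElem _ _ hk, List.getD_eq_getElem _ _ (hlen ▸ hk)] using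
    Nat.find_spec hex

end SortedLists

lemma msGT_of_card_filter_le {m m' : Multiset Colour} (hcard : m.card = m'.card) (hne : m' ≠ m)
    (hcnt : ∀ x, (m'.filter (· ≤ x)).card ≤ (m.filter (· ≤ x)).card) : msGT m' m := by
  have hsorted (m : Multiset Colour) : (sortedCol m).SortedLE :=
    (Multiset.pairwise_sort m _).sortedLE
  have hcoe (m : Multiset Colour) : (sortedCol m : Multiset Colour) = m := Multiset.sort_eq m _
  have hlen : (sortedCol m).length = (sortedCol m').length := by
    simpa only [sortedCol, Multiset.length_sort] using hcard
  have hfilter (m : Multiset Colour) (x : Colour) :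
      ((sortedCol m).filter (· ≤ x)).length = (m.filter (· ≤ x)).card := by
    conv_rhs => rw [← hcoe m]
    rw [Multiset.filter_coe, Multiset.coe_card]
  obtain ⟨k, hpre, hk, hne'⟩ := List.exists_getD_ne_of_ne hlen
    (fun h => hne (by rw [← hcoe m, ← hcoe m', h])) (cCol 0)
  refine ⟨k, fun s hs => (hpre s hs).symm, ?_⟩
  rw [List.getD_eq_getElem _ _ hk, List.getD_eq_getElem _ _ (hlen ▸ hk)]
  exact lt_of_le_of_ne ((hsorted m).getElem_le_getElem_of_length_filter_le (hsorted m') hlen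
    (fun x => by simpa only [hfilter] using hcnt x) hk) hne'

section Cells

variable {lam : List ℕ}

lemma colMul_comp_of_col_eq (T : Cell lam → Colour) (s : Cell lam ≃ Cell lam)
    (hs : ∀ c, ((s c).2 : ℕ) = c.2) (j : ℕ) : colMul (T ∘ s) j = colMul T j := by
  have himg : (univ.filter fun c : Cell lam => (c.2 : ℕ) = j).map s.toEmbedding =
      univ.filter fun c : Cell lam => (c.2 : ℕ) = j := by
    ext c
    have hc := hs (s.symm c)
    rw [Equiv.apply_symm_apply] at hc
    simp [Finset.mem_map_equiv, hc]
  rw [colMul, colMul]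
  conv_rhs => rw [← himg, Finset.map_val, Multiset.map_map]
  rfl

lemma card_filter_colMul (T : Cell lam → Colour) (j : ℕ) (x : Colour) :
    ((colMul T j).filter (· ≤ x)).card = #{c : Cell lam | (c.2 : ℕ) = j ∧ T c ≤ x} := by
  rw [colMul, Multiset.filter_map, Multiset.card_map, ← Finset.filter_val, Finset.filter_filter]
  rfl

lemma card_filter_col_le_eq_sum (T : Cell lam → Colour) (t : ℕ) (x : Colour) :
    #{c : Cell lam | (c.2 : ℕ) ≤ t ∧ T c ≤ x} =
      ∑ j ∈ range (t + 1), ((colMul T j).filter (· ≤ x)).card := by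
  rw [card_eq_sum_card_fiberwise (f := fun c : Cell lam => (c.2 : ℕ)) (t := range (t + 1))]
  · refine Finset.sum_congr rfl fun j hj => ?_
    rw [card_filter_colMul, Finset.filter_filter]
    congr 1
    refine Finset.filter_congr fun c _ => ?_
    have := Finset.mem_range.1 hj
    constructor
    · rintro ⟨⟨-, hx⟩, rfl⟩; exact ⟨rfl, hx⟩
    · rintro ⟨rfl, hx⟩; exact ⟨⟨by omega, hx⟩, rfl⟩
  · intro c hc
    simp only [coe_filter, Finset.mem_univ, true_and] at hc
    simpa [Nat.lt_succ_iff] using hc.1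

/-- Along a row `T` increases weakly, so either every cell of the row in columns `≤ j` has
colour `≤ x`, or every cell of the row with colour `≤ x` lies in a column `≤ j`. -/
lemma card_row_filter_comp_le {T : Cell lam → Colour} (hT : RowSemistd T)
    {r : Cell lam ≃ Cell lam} (hr : ∀ c, (r c).1 = c.1) (i : Fin lam.length) (j : ℕ)
    (x : Colour) :
    #{c : Cell lam | c.1 = i ∧ (c.2 : ℕ) ≤ j ∧ T (r c) ≤ x} ≤
      #{c : Cell lam | c.1 = i ∧ (c.2 : ℕ) ≤ j ∧ T c ≤ x} := by
  by_cases hbig : ∃ c₀ : Cell lam, c₀.1 = i ∧ (c₀.2 : ℕ) ≤ j ∧ x < T c₀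
  · obtain ⟨c₀, hc₀i, hc₀j, hc₀x⟩ := hbig
    calc _ ≤ #{c : Cell lam | c.1 = i ∧ T c ≤ x} :=
          card_le_card_of_injOn r (fun c hc => ?_) r.injective.injOn
      _ ≤ _ := card_le_card fun c hc => ?_
    · simp only [mem_coe, mem_filter, mem_univ, true_and] at hc ⊢
      exact ⟨(hr c).trans hc.1, hc.2.2⟩
    · simp only [mem_filter, mem_univ, true_and] at hc ⊢
      refine ⟨hc.1, ?_, hc.2⟩
      by_contra! hjc
      exact (hc₀x.trans_le (hT c₀ c (hc₀i.trans hc.1.symm) (by omega))).not_ge hc.2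
  · push Not at hbig
    refine card_le_card fun c hc => ?_
    simp only [mem_filter, mem_univ, true_and] at hc ⊢
    exact ⟨hc.1, hc.2.1, hbig c hc.1 hc.2.1⟩

lemma card_filter_comp_le {T : Cell lam → Colour} (hT : RowSemistd T)
    {r : Cell lam ≃ Cell lam} (hr : ∀ c, (r c).1 = c.1) (j : ℕ) (x : Colour) :
    #{c : Cell lam | (c.2 : ℕ) ≤ j ∧ (T ∘ r) c ≤ x} ≤
      #{c : Cell lam | (c.2 : ℕ) ≤ j ∧ T c ≤ x} := by
  have hrow (P : Cell lam → Prop) [DecidablePred P] :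
      #{c : Cell lam | P c} = ∑ i, #{c : Cell lam | c.1 = i ∧ P c} := by
    rw [card_eq_sum_card_fiberwise (f := Sigma.fst) (t := univ) fun _ _ => mem_coe.2 (mem_univ _)]
    simp only [filter_filter, and_comm]
  rw [hrow, hrow]
  exact sum_le_sum fun i _ => card_row_filter_comp_le hT hr i j x

theorem tabGE_comp_of_rowSemistd {T : Cell lam → Colour} (hT : RowSemistd T)
    {r : Cell lam ≃ Cell lam} (hr : ∀ c, (r c).1 = c.1) : TabGE (T ∘ r) T := by
  by_cases hall : ∀ j, colMul (T ∘ r) j = colMul T j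
  · exact Or.inl hall
  push Not at hall
  have hpre : ∀ j < Nat.find hall, colMul (T ∘ r) j = colMul T j :=
    fun j hj => not_not.1 (Nat.find_min hall hj)
  refine Or.inr ⟨Nat.find hall, hpre, msGT_of_card_filter_le ?_ (Nat.find_spec hall) fun x => ?_⟩
  · simp only [colMul, Multiset.card_map]
  · have := card_filter_comp_le hT hr (Nat.find hall) x
    rw [card_filter_col_le_eq_sum, card_filter_col_le_eq_sum, sum_range_succ, sum_range_succ,
      sum_congr rfl fun j hj => by rw [hpre j (mem_range.1 hj)]] at this
    omega

end Cells

section Action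

variable {n : ℕ} {lam : List ℕ} {t0 : Tab n lam}

lemma inv_mem_rowStab {τ : Sym n} (hτ : τ ∈ rowStab t0) : τ⁻¹ ∈ rowStab t0 := fun a => by
  have := hτ (τ⁻¹ a)
  rwa [Equiv.Perm.coe_inv, Equiv.apply_symm_apply, eq_comm] at this

lemma inv_mem_colStab {σ : Sym n} (hσ : σ ∈ colStab t0) : σ⁻¹ ∈ colStab t0 := fun a => by
  have := hσ (σ⁻¹ a)
  rwa [Equiv.Perm.coe_inv, Equiv.apply_symm_apply, eq_comm] at this

lemma actT_eq_comp (π : Sym n) (T : Cell lam → Colour) :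
    actT t0 π T = T ∘ (t0.trans (π⁻¹.trans t0.symm)) :=
  rfl

lemma colMul_actT {σ : Sym n} (hσ : σ ∈ colStab t0) (T : Cell lam → Colour) (j : ℕ) :
    colMul (actT t0 σ T) j = colMul T j := by
  refine actT_eq_comp σ T ▸ colMul_comp_of_col_eq T _ (fun c => ?_) j
  have := inv_mem_colStab hσ (t0 c)
  rwa [Equiv.symm_apply_apply] at this

theorem tabGE_actT {τ : Sym n} (hτ : τ ∈ rowStab t0) {T : Cell lam → Colour}
    (hT : RowSemistd T) : TabGE (actT t0 τ T) T := by
  refine actT_eq_comp τ T ▸ tabGE_comp_of_rowSemistd hT fun c => ?_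
  have := inv_mem_rowStab hτ (t0 c)
  rwa [Equiv.symm_apply_apply] at this

lemma TOf_mul (α β : List ℕ) (π d : Sym n) :
    TOf t0 α β (π * d) = actT t0 π (TOf t0 α β d) := by
  ext c
  simp [TOf, actT, canonT, mul_inv_rev]

lemma TOf_mul_of_mem_youngSubgroup (α β : List ℕ) (d : Sym n) {ξ : Sym n}
    (hξ : ξ ∈ youngSubgroup n (α ++ β)) : TOf t0 α β (d * ξ) = TOf t0 α β d := by
  ext c
  have hblock : blockOf (α ++ β) (ξ⁻¹ (d⁻¹ (t0 c))) = blockOf (α ++ β) (d⁻¹ (t0 c)) :=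
    (youngSubgroup n (α ++ β)).inv_mem hξ _
  simp only [TOf, actT, canonT, colourOfIdx, mul_inv_rev, Equiv.Perm.mul_apply,
    Equiv.apply_symm_apply, hblock]

lemma TabGE.congr_left {T₁ T₂ T : Cell lam → Colour} (h : ∀ j, colMul T₁ j = colMul T₂ j)
    (hge : TabGE T₂ T) : TabGE T₁ T := by
  simp only [TabGE, TabGT, msGT, h] at hge ⊢
  exact hge

end Action

theorem coeffA_ne_zero_dominance_general (n : ℕ) (lam : List ℕ)
    (α β : List ℕ) (t0 : Tab n lam) (d d' : Sym n)
    (hss : IsSemistd (TOf t0 α β d))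
    (ε : Sym n → ℤ)
    (h : coeffA t0 α β ε d' d ≠ 0) :
    TabGE (TOf t0 α β d') (TOf t0 α β d) := by
  obtain ⟨σ, -, hσ⟩ := Finset.exists_ne_zero_of_sum_ne_zero h
  obtain ⟨⟨hσcol, τ, hτ, ξ, hξ, heq⟩, -⟩ := ite_ne_right_iff.1 hσ
  have hd' : d' = σ⁻¹ * (τ * (d * ξ)) := by
    rw [eq_inv_mul_iff_mul_eq, heq, mul_assoc]
  have hT : TOf t0 α β d' = actT t0 σ⁻¹ (actT t0 τ (TOf t0 α β d)) := by
    rw [hd', TOf_mul, TOf_mul, TOf_mul_of_mem_youngSubgroup α β d hξ]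
  rw [hT]
  exact (tabGE_actT hτ hss.1).congr_left (colMul_actT (inv_mem_colStab hσcol) _)

/-- **Dominance (Lemma 4.2(iii)).** If `T_d` is semistandard and `𝔞_{d',d} ≠ 0`, then
`T_{d'} ⊵ T_d` in the column-dominance pre-order. -/
theorem coeffA_ne_zero_dominance (n : ℕ) (lam : List ℕ) (hl : IsPartition n lam)
    (α β : List ℕ) (hab : IsBicomp n α β) (t0 : Tab n lam) (d d' : Sym n)
    (hss : IsSemistd (TOf t0 α β d)) (hd : d ∈ RSet t0 α β)
    (ε : Sym n → ℤ) (hε : IsEps t0 α β d ε)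
    (h : coeffA t0 α β ε d' d ≠ 0) :
    TabGE (TOf t0 α β d') (TOf t0 α β d) :=
  coeffA_ne_zero_dominance_general n lam α β t0 d d' hss ε h

end SignedYoung
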